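/- Let X be a rack, k a commutative ring (e.g. an algebraically closed field of characteristic 0), W a k-module, and q : X × X → GL(W) a 2-cocycle, i.e. a family of k-linear automorphisms q_{x,y} of W satisfying q_{x, y▷z} ∘ q_{y,z} = q_{x▷y, x▷z} ∘ q_{x,z} for all x, y, z ∈ X. Let V = kX ⊗ W be the free k-module on X with coefficients in W (i.e. V = X →₀ W, with e_x w denoting w placed in the x-component), and let c^q : V ⊗ V → V ⊗ V be the k-linear map determined on basis elements by c^q(e_x v ⊗ e_y w) = e_{x▷y}(q_{x,y}(w)) ⊗ e_x v. Then c^q satisfies the braid equation: (c^q ⊗ id)(id ⊗ c^q)(c^q ⊗ id) = (id ⊗ c^q)(c^q ⊗ id)(id ⊗ c^q) as endomorphisms of V ⊗ V ⊗ V. -/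

import Mathlib

open Quandles TensorProduct

/-! Both sides send `e_x v ⊗ e_y w ⊗ e_z u` to a tensor of the form
`e_a (r u) ⊗ e_{x ◃ y} (q_{x,y} w) ⊗ e_x v`: on the left with `a = (x ◃ y) ◃ (x ◃ z)` and
`r = q_{x◃y, x◃z} ∘ q_{x,z}`, on the right with `a = x ◃ (y ◃ z)` and `r = q_{x, y◃z} ∘ q_{y,z}`.
Self-distributivity identifies the indices and the cocycle condition the coefficients; since the
elementary tensors of singles span `V ⊗ V ⊗ V`, this suffices. -/

theorem Finsupp.tensorProduct_ext_single₃ {R : Type*} [CommSemiring R] {X Y Z U V W M : Type*}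
    [AddCommMonoid U] [AddCommMonoid V] [AddCommMonoid W] [AddCommMonoid M]
    [Module R U] [Module R V] [Module R W] [Module R M]
    {f g : ((X →₀ U) ⊗[R] (Y →₀ V)) ⊗[R] (Z →₀ W) →ₗ[R] M}
    (h : ∀ x y z u v w, f (single x u ⊗ₜ single y v ⊗ₜ single z w)
      = g (single x u ⊗ₜ single y v ⊗ₜ single z w)) : f = g := by
  ext x u y v z w
  exact h x y z u v w

theorem braid_equation_of_rack_cocycle_general
    {X : Type*} [Rack X]
    {k : Type*} [CommRing k] {W : Type*} [AddCommGroup W] [Module k W]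
    (q : X → X → W ≃ₗ[k] W)
    (hq : ∀ x y z : X,
      (q x (y ◃ z)).toLinearMap ∘ₗ (q y z).toLinearMap
        = (q (x ◃ y) (x ◃ z)).toLinearMap ∘ₗ (q x z).toLinearMap)
    (c : (X →₀ W) ⊗[k] (X →₀ W) →ₗ[k] (X →₀ W) ⊗[k] (X →₀ W))
    (hc : ∀ (x y : X) (v w : W),
      c (Finsupp.single x v ⊗ₜ[k] Finsupp.single y w)
        = Finsupp.single (x ◃ y) (q x y w) ⊗ₜ[k] Finsupp.single x v) :
    (LinearMap.rTensor (X →₀ W) c)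
      ∘ₗ ((TensorProduct.assoc k (X →₀ W) (X →₀ W) (X →₀ W)).symm.toLinearMap
          ∘ₗ (LinearMap.lTensor (X →₀ W) c)
          ∘ₗ (TensorProduct.assoc k (X →₀ W) (X →₀ W) (X →₀ W)).toLinearMap)
      ∘ₗ (LinearMap.rTensor (X →₀ W) c)
    =
    ((TensorProduct.assoc k (X →₀ W) (X →₀ W) (X →₀ W)).symm.toLinearMap
          ∘ₗ (LinearMap.lTensor (X →₀ W) c)
          ∘ₗ (TensorProduct.assoc k (X →₀ W) (X →₀ W) (X →₀ W)).toLinearMap)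
      ∘ₗ (LinearMap.rTensor (X →₀ W) c)
      ∘ₗ ((TensorProduct.assoc k (X →₀ W) (X →₀ W) (X →₀ W)).symm.toLinearMap
          ∘ₗ (LinearMap.lTensor (X →₀ W) c)
          ∘ₗ (TensorProduct.assoc k (X →₀ W) (X →₀ W) (X →₀ W)).toLinearMap) := by
  refine Finsupp.tensorProduct_ext_single₃ fun x y z v w u => ?_
  simp only [LinearMap.comp_apply, LinearEquiv.coe_coe, LinearMap.rTensor_tmul,
    LinearMap.lTensor_tmul, TensorProduct.assoc_tmul, TensorProduct.assoc_symm_tmul, hc]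
  have hqu := LinearMap.congr_fun (hq x y z) u
  simp only [LinearMap.comp_apply, LinearEquiv.coe_coe] at hqu
  rw [← Rack.self_distrib, hqu]

/-- Let `X` be a rack, `k` a commutative ring, `W` a `k`-module and
`q : X × X → GL(W)` a 2-cocycle.  Let `V = kX ⊗ W = (X →₀ W)` and let
`c = c^q : V ⊗ V → V ⊗ V` be the `k`-linear map determined on basis elements by
`c (e_x v ⊗ e_y w) = e_{x ◃ y} (q_{x,y} w) ⊗ e_x v`.
Then `c` satisfies the braid equation
`(c ⊗ id)(id ⊗ c)(c ⊗ id) = (id ⊗ c)(c ⊗ id)(id ⊗ c)` on `(V ⊗ V) ⊗ V`,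
where `id ⊗ c` is transported along the associator. -/
theorem braid_equation_of_rack_cocycle
    {X : Type*} [Rack X] [Nonempty X]
    {k : Type*} [CommRing k] {W : Type*} [AddCommGroup W] [Module k W]
    (q : X → X → W ≃ₗ[k] W)
    (hq : ∀ x y z : X,
      (q x (y ◃ z)).toLinearMap ∘ₗ (q y z).toLinearMap
        = (q (x ◃ y) (x ◃ z)).toLinearMap ∘ₗ (q x z).toLinearMap)
    (c : (X →₀ W) ⊗[k] (X →₀ W) →ₗ[k] (X →₀ W) ⊗[k] (X →₀ W))
    (hc : ∀ (x y : X) (v w : W),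
      c (Finsupp.single x v ⊗ₜ[k] Finsupp.single y w)
        = Finsupp.single (x ◃ y) (q x y w) ⊗ₜ[k] Finsupp.single x v) :
    (LinearMap.rTensor (X →₀ W) c)
      ∘ₗ ((TensorProduct.assoc k (X →₀ W) (X →₀ W) (X →₀ W)).symm.toLinearMap
          ∘ₗ (LinearMap.lTensor (X →₀ W) c)
          ∘ₗ (TensorProduct.assoc k (X →₀ W) (X →₀ W) (X →₀ W)).toLinearMap)
      ∘ₗ (LinearMap.rTensor (X →₀ W) c)
    =
    ((TensorProduct.assoc k (X →₀ W) (X →₀ W) (X →₀ W)).symm.toLinearMap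
          ∘ₗ (LinearMap.lTensor (X →₀ W) c)
          ∘ₗ (TensorProduct.assoc k (X →₀ W) (X →₀ W) (X →₀ W)).toLinearMap)
      ∘ₗ (LinearMap.rTensor (X →₀ W) c)
      ∘ₗ ((TensorProduct.assoc k (X →₀ W) (X →₀ W) (X →₀ W)).symm.toLinearMap
          ∘ₗ (LinearMap.lTensor (X →₀ W) c)
          ∘ₗ (TensorProduct.assoc k (X →₀ W) (X →₀ W) (X →₀ W)).toLinearMap) :=
  braid_equation_of_rack_cocycle_general q hq c hc
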